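/- Let X and Y be random variables with values in a finite set S, and let W be another random variable, such that X and Y are conditionally independent given W and (X,W) has the same law as (Y,W). If for every i ∈ S, P(X = i, Y = i) = P(X = i)², then the conditional distribution of X given W equals the unconditional distribution of X almost surely; that is, X is independent of W. -/

import Mathlib

/-!
Let `f = P(X = i | W)`. Since `(X, W)` and `(Y, W)` have the same law, `f` is also
`P(Y = i | W)`, so conditional independence gives `P(X = i, Y = i | W) = f²`. Taking
expectations, `E[f²] = P(X = i, Y = i) = P(X = i)² = (E f)²`: the variance of `f` vanishes and
`f` is a.s. the constant `P(X = i)`. Integrating this over the events `{W ∈ t}` gives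
`P(X = i, W ∈ t) = P(X = i) P(W ∈ t)`, and summing over `i` gives independence.
-/

open MeasureTheory ProbabilityTheory

section

variable {Ω : Type*} {m mΩ : MeasurableSpace Ω} {μ : Measure Ω} {A B : Set Ω}

lemma ae_eq_integral_of_integral_sq_eq_sq_integral [IsProbabilityMeasure μ] {f : Ω → ℝ}
    (hf : MemLp f 2 μ) (h : ∫ ω, f ω ^ 2 ∂μ = (∫ ω, f ω ∂μ) ^ 2) :
    ∀ᵐ ω ∂μ, f ω = ∫ ω, f ω ∂μ := by
  refine ae_eq_integral_of_variance_eq_zero hf ?_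
  rw [variance_eq_sub hf, sub_eq_zero]
  exact h

lemma condExp_indicator_ae_eq_measureReal_of_inter [IsProbabilityMeasure μ] (hm : m ≤ mΩ)
    (hA : MeasurableSet A) (hB : MeasurableSet B) (hAB : μ⟦A | m⟧ =ᵐ[μ] μ⟦B | m⟧)
    (hind : μ⟦A ∩ B | m⟧ =ᵐ[μ] fun ω ↦ (μ⟦A | m⟧) ω * (μ⟦B | m⟧) ω)
    (hsq : μ.real (A ∩ B) = μ.real A ^ 2) :
    μ⟦A | m⟧ =ᵐ[μ] fun _ ↦ μ.real A := by
  have hmean : ∫ ω, (μ⟦A | m⟧) ω ∂μ = μ.real A := by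
    rw [integral_condExp hm, integral_indicator_const _ hA, smul_eq_mul, mul_one]
  have hsecond : ∫ ω, (μ⟦A | m⟧) ω ^ 2 ∂μ = μ.real A ^ 2 := by
    have hsq_ae : (fun ω ↦ (μ⟦A | m⟧) ω ^ 2) =ᵐ[μ] μ⟦A ∩ B | m⟧ := by
      filter_upwards [hAB, hind] with ω hω hω'
      rw [hω', ← hω, sq]
    rw [integral_congr_ae hsq_ae, integral_condExp hm,
      integral_indicator_const _ (hA.inter hB), smul_eq_mul, mul_one, hsq]
  have hL2 : MemLp (μ⟦A | m⟧) 2 μ :=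
    (memLp_indicator_const 2 hA (1 : ℝ) (Or.inr (measure_ne_top μ A))).condExp one_le_two
  rw [← hmean]
  exact ae_eq_integral_of_integral_sq_eq_sq_integral hL2 (by rw [hsecond, hmean])

lemma measure_inter_eq_mul_of_condExp_indicator_ae_eq_const [IsFiniteMeasure μ] (hm : m ≤ mΩ)
    (hA : MeasurableSet A) (hcond : μ⟦A | m⟧ =ᵐ[μ] fun _ ↦ μ.real A) (hB : MeasurableSet[m] B) :
    μ (A ∩ B) = μ A * μ B := by
  have h := setIntegral_condExp hm ((integrable_const (μ := μ) (1 : ℝ)).indicator hA) hB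
  rw [setIntegral_congr_ae (hm B hB) (hcond.mono fun _ hω _ ↦ hω), setIntegral_const,
    setIntegral_indicator hA, setIntegral_const, smul_eq_mul, smul_eq_mul, mul_one,
    Set.inter_comm, mul_comm] at h
  rw [← ENNReal.toReal_eq_toReal_iff' (measure_ne_top μ _)
    (ENNReal.mul_ne_top (measure_ne_top μ _) (measure_ne_top μ _)), ENNReal.toReal_mul]
  exact h.symm

end

section

variable {Ω α E : Type*} {mΩ : MeasurableSpace Ω} [MeasurableSpace α] [MeasurableSpace E]
  {μ : Measure Ω} {X Y : Ω → α} {W : Ω → E}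

lemma ProbabilityTheory.IdentDistrib.condExp_indicator_preimage_ae_eq [IsFiniteMeasure μ]
    (hID : IdentDistrib (fun ω ↦ (X ω, W ω)) (fun ω ↦ (Y ω, W ω)) μ μ)
    (hX : Measurable X) (hY : Measurable Y) (hW : Measurable W) {s : Set α}
    (hs : MeasurableSet s) :
    μ⟦X ⁻¹' s | MeasurableSpace.comap W inferInstance⟧
      =ᵐ[μ] μ⟦Y ⁻¹' s | MeasurableSpace.comap W inferInstance⟧ := by
  have hm := hW.comap_le
  refine ae_eq_condExp_of_forall_setIntegral_eq hm
    ((integrable_const (μ := μ) (1 : ℝ)).indicator (hY hs))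
    (fun _ _ _ ↦ integrable_condExp.integrableOn) ?_
    stronglyMeasurable_condExp.aestronglyMeasurable
  rintro _ ⟨t, ht, rfl⟩ -
  have hjoint := hID.measure_mem_eq (hs.prod ht)
  rw [Set.mk_preimage_prod, Set.mk_preimage_prod] at hjoint
  rw [setIntegral_condExp hm ((integrable_const (1 : ℝ)).indicator (hX hs)) ⟨t, ht, rfl⟩,
    setIntegral_indicator (hX hs), setIntegral_indicator (hY hs), setIntegral_const,
    setIntegral_const, measureReal_def, measureReal_def, Set.inter_comm _ (X ⁻¹' s),
    Set.inter_comm _ (Y ⁻¹' s), hjoint]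

lemma indepFun_of_measure_inter_preimage_singleton_eq_mul [Countable α]
    [MeasurableSingletonClass α] (hX : Measurable X)
    (h : ∀ i t, MeasurableSet t → μ (X ⁻¹' {i} ∩ W ⁻¹' t) = μ (X ⁻¹' {i}) * μ (W ⁻¹' t)) :
    IndepFun X W μ := by
  rw [indepFun_iff_measure_inter_preimage_eq_mul]
  intro s t hs ht
  have hfibers (ν : Measure Ω) : ν (X ⁻¹' s) = ∑' i : s, ν (X ⁻¹' {↑i}) :=
    (tsum_measure_preimage_singleton s.to_countable fun i _ ↦ hX (measurableSet_singleton i)).symm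
  rw [← Measure.restrict_apply (hX hs), hfibers, hfibers, ← ENNReal.tsum_mul_right]
  congr 1 with i
  rw [Measure.restrict_apply (hX (measurableSet_singleton _)), h _ _ ht]

end

/-- Let `X, Y` take values in a finite set `S` and `W` in a measurable
space `E`, with `X, Y` conditionally independent given `W` and `(X,W) =_d (Y,W)`.
If `P(X = i, Y = i) = P(X = i)²` for every `i ∈ S`, then the conditional distribution
of `X` given `W` equals the unconditional one a.s., i.e. `X` is independent of `W`. -/
theorem stmt4 {Ω S E : Type*} {mΩ : MeasurableSpace Ω} [StandardBorelSpace Ω]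
    [Fintype S] [MeasurableSpace S] [MeasurableSingletonClass S] [MeasurableSpace E]
    (μ : Measure Ω) [IsProbabilityMeasure μ]
    (X Y : Ω → S) (W : Ω → E)
    (hX : Measurable X) (hY : Measurable Y) (hW : Measurable W)
    (hCI : CondIndepFun (MeasurableSpace.comap W inferInstance) (hW.comap_le) X Y μ)
    (hID : IdentDistrib (fun ω => (X ω, W ω)) (fun ω => (Y ω, W ω)) μ μ)
    (hsq : ∀ i : S, μ {ω | X ω = i ∧ Y ω = i} = μ {ω | X ω = i} * μ {ω | X ω = i}) :
    (∀ i : S,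
      μ[(X ⁻¹' {i}).indicator (fun _ => (1 : ℝ)) | MeasurableSpace.comap W inferInstance]
        =ᵐ[μ] fun _ => (μ (X ⁻¹' {i})).toReal) ∧
    IndepFun X W μ := by
  have hcond (i : S) : μ⟦X ⁻¹' {i} | MeasurableSpace.comap W inferInstance⟧
      =ᵐ[μ] fun _ ↦ μ.real (X ⁻¹' {i}) := by
    have hi := measurableSet_singleton i
    refine condExp_indicator_ae_eq_measureReal_of_inter hW.comap_le (hX hi) (hY hi)
      (hID.condExp_indicator_preimage_ae_eq hX hY hW hi)
      ((condIndepFun_iff_condExp_inter_preimage_eq_mul hX hY).1 hCI _ _ hi hi) ?_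
    rw [measureReal_def, measureReal_def, sq, ← ENNReal.toReal_mul]
    exact congrArg ENNReal.toReal (hsq i)
  refine ⟨hcond, indepFun_of_measure_inter_preimage_singleton_eq_mul hX fun i t ht ↦ ?_⟩
  exact measure_inter_eq_mul_of_condExp_indicator_ae_eq_const hW.comap_le
    (hX (measurableSet_singleton i)) (hcond i) ⟨t, ht, rfl⟩
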